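/- The right-angled Artin group functor A : Gph → Grp is comonadic: A restricts to an equivalence of categories between the category Gph of reflexive graphs with graph homomorphisms and the category Grp_{AC} of groups equipped with an AC-coalgebra structure, with AC-cohomomorphisms as morphisms. -/

import Mathlib

/-- A (reflexive, symmetric) graph: a set of vertices with a reflexive
symmetric relation. -/
structure Gph : Type 1 where
  V : Type
  rel : V → V → Prop
  refl : ∀ v, rel v v
  symm : ∀ {v w}, rel v w → rel w v

/-- A homomorphism of graphs: a function on vertices preserving the relation. -/
@[ext]
structure GphHom (Γ Δ : Gph) where
  toFun : Γ.V → Δ.V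
  map_rel : ∀ {v w}, Γ.rel v w → Δ.rel (toFun v) (toFun w)

/-- The identity graph homomorphism. -/
def GphHom.id (Γ : Gph) : GphHom Γ Γ :=
  ⟨fun v => v, fun h => h⟩

/-- Composition of graph homomorphisms. -/
def GphHom.comp {Γ Δ Θ : Gph} (ψ : GphHom Δ Θ) (φ : GphHom Γ Δ) : GphHom Γ Θ :=
  ⟨fun v => ψ.toFun (φ.toFun v), fun h => ψ.map_rel (φ.map_rel h)⟩

/-- The commutator relators of the right-angled Artin group of `Γ`. -/
def raagRels (Γ : Gph) : Set (FreeGroup Γ.V) :=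
  { r | ∃ v w, Γ.rel v w ∧
      r = FreeGroup.of v * FreeGroup.of w * (FreeGroup.of v)⁻¹ * (FreeGroup.of w)⁻¹ }

/-- The right-angled Artin group of a graph `Γ`: generated by the vertices,
with commutation relations given by the edges. -/
abbrev Raag (Γ : Gph) : Type :=
  PresentedGroup (raagRels Γ)

/-- The image of a vertex `v` as a generator of the right-angled Artin group. -/
def Raag.of {Γ : Gph} (v : Γ.V) : Raag Γ :=
  PresentedGroup.of v

/-- Related vertices commute in the right-angled Artin group. -/
theorem Raag.commute_of {Γ : Gph} {v w : Γ.V} (h : Γ.rel v w) :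
    Commute (Raag.of v) (Raag.of w) := by
  have h1 : (PresentedGroup.mk (raagRels Γ))
      (FreeGroup.of v * FreeGroup.of w * (FreeGroup.of v)⁻¹ * (FreeGroup.of w)⁻¹) = 1 := by
    apply (QuotientGroup.eq_one_iff _).2
    exact Subgroup.subset_normalClosure ⟨v, w, h, rfl⟩
  rw [← commutatorElement_eq_one_iff_commute]
  simpa only [commutatorElement_def, map_mul, map_inv, Raag.of, PresentedGroup.of] using h1

/-- The universal property of the right-angled Artin group. -/
def Raag.lift {Γ : Gph} {G : Type*} [Group G] (f : Γ.V → G)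
    (hf : ∀ {v w}, Γ.rel v w → Commute (f v) (f w)) : Raag Γ →* G :=
  PresentedGroup.toGroup (f := f) (by
    rintro r ⟨v, w, hvw, rfl⟩
    have := commutatorElement_eq_one_iff_commute.2 (hf hvw)
    rw [commutatorElement_def] at this
    simpa only [map_mul, map_inv, FreeGroup.lift_apply_of] using this)

@[simp]
theorem Raag.lift_of {Γ : Gph} {G : Type*} [Group G] (f : Γ.V → G)
    (hf : ∀ {v w}, Γ.rel v w → Commute (f v) (f w)) (v : Γ.V) :
    Raag.lift f hf (Raag.of v) = f v :=
  PresentedGroup.toGroup.of _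

theorem Raag.hom_ext {Γ : Gph} {G : Type*} [Group G] {f g : Raag Γ →* G}
    (h : ∀ v, f (Raag.of v) = g (Raag.of v)) : f = g :=
  PresentedGroup.ext h

/-- The group homomorphism `Aφ` induced by a graph homomorphism `φ`. -/
def GphHom.map {Γ Δ : Gph} (φ : GphHom Γ Δ) : Raag Γ →* Raag Δ :=
  Raag.lift (fun v => Raag.of (φ.toFun v)) (fun h => Raag.commute_of (φ.map_rel h))

@[simp]
theorem GphHom.map_of {Γ Δ : Gph} (φ : GphHom Γ Δ) (v : Γ.V) :
    φ.map (Raag.of v) = Raag.of (φ.toFun v) :=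
  Raag.lift_of _ (fun h => Raag.commute_of (φ.map_rel h)) v

/-- The commutation graph of a group `G`: vertices are elements of `G`,
related exactly when they commute. -/
abbrev commGraph (G : Type) [Group G] : Gph where
  V := G
  rel g h := g * h = h * g
  refl _ := rfl
  symm h := h.symm

/-- `AC G`: the right-angled Artin group of the commutation graph of `G`. -/
abbrev AC (G : Type) [Group G] : Type :=
  Raag (commGraph G)

/-- `ACf : ACG →* ACH`, `[g] ↦ [f g]`, induced by a group homomorphism `f`. -/
def ACmap {G H : Type} [Group G] [Group H] (f : G →* H) : AC G →* AC H :=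
  GphHom.map (Γ := commGraph G) (Δ := commGraph H)
    ⟨f, fun {a b} h => show f a * f b = f b * f a by
      rw [← map_mul, show a * b = b * a from h, map_mul]⟩

@[simp]
theorem ACmap_of {G H : Type} [Group G] [Group H] (f : G →* H) (g : G) :
    ACmap f (Raag.of (Γ := commGraph G) g) = Raag.of (Γ := commGraph H) (f g) :=
  GphHom.map_of _ _

/-- The counit `ε_G : ACG →* G`, `[g] ↦ g`. -/
def ACcounit (G : Type) [Group G] : AC G →* G :=
  Raag.lift (Γ := commGraph G) (fun g => g) (fun h => h)

@[simp]
theorem ACcounit_of {G : Type} [Group G] (g : G) :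
    ACcounit G (Raag.of (Γ := commGraph G) g) = g :=
  Raag.lift_of (Γ := commGraph G) (fun g => g) (fun h => h) g

/-- The comultiplication `δ_G : ACG →* AC(ACG)`, `[g] ↦ [[g]]`. -/
def ACcomul (G : Type) [Group G] : AC G →* AC (AC G) :=
  Raag.lift (Γ := commGraph G)
    (fun g => Raag.of (Γ := commGraph (AC G)) (Raag.of (Γ := commGraph G) g))
    (fun h => Raag.commute_of (Raag.commute_of h))

@[simp]
theorem ACcomul_of {G : Type} [Group G] (g : G) :
    ACcomul G (Raag.of (Γ := commGraph G) g) =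
      Raag.of (Γ := commGraph (AC G)) (Raag.of (Γ := commGraph G) g) :=
  Raag.lift_of (Γ := commGraph G) _ (fun h => Raag.commute_of (Raag.commute_of h)) g

/-- The canonical `AC`-coalgebra structure map on a right-angled Artin group,
sending each vertex generator `v` to `[v]`. -/
def raagCoalgStr (Γ : Gph) : Raag Γ →* AC (Raag Γ) :=
  Raag.lift (fun v => Raag.of (Γ := commGraph (Raag Γ)) (Raag.of v))
    (fun h => Raag.commute_of (Raag.commute_of h))

@[simp]
theorem raagCoalgStr_of {Γ : Gph} (v : Γ.V) :
    raagCoalgStr Γ (Raag.of v) = Raag.of (Γ := commGraph (Raag Γ)) (Raag.of v) :=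
  Raag.lift_of _ (fun h => Raag.commute_of (Raag.commute_of h)) v

/-- An `AC`-coalgebra structure on a group `G` is a group homomorphism
`𝔤 : G →* ACG` satisfying the counit and coassociativity laws. -/
def IsACCoalgebra {G : Type} [Group G] (𝔤 : G →* AC G) : Prop :=
  (ACcounit G).comp 𝔤 = MonoidHom.id G ∧ (ACmap 𝔤).comp 𝔤 = (ACcomul G).comp 𝔤

/-- `f` is an `AC`-cohomomorphism from `(G, 𝔤)` to `(H, 𝔥)`. -/
def IsACCohom {G H : Type} [Group G] [Group H]
    (𝔤 : G →* AC G) (𝔥 : H →* AC H) (f : G →* H) : Prop :=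
  𝔥.comp f = (ACmap f).comp 𝔤
open CategoryTheory

/-- The category `Gph` of (reflexive) graphs and graph homomorphisms. -/
instance : Category Gph where
  Hom := GphHom
  id := GphHom.id
  comp φ ψ := ψ.comp φ
  id_comp _ := rfl
  comp_id _ := rfl
  assoc _ _ _ := rfl
theorem ACmap_id (G : Type) [Group G] : ACmap (MonoidHom.id G) = MonoidHom.id (AC G) :=
  Raag.hom_ext fun g => by simp

theorem ACmap_comp {G H K : Type} [Group G] [Group H] [Group K] (f : G →* H) (g : H →* K) :
    ACmap (g.comp f) = (ACmap g).comp (ACmap f) :=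
  Raag.hom_ext fun x => by simp

/-- The category `Grp_{AC}` of groups equipped with an `AC`-coalgebra structure. -/
structure ACCoalgebra : Type 1 where
  carrier : Type
  [grp : Group carrier]
  str : carrier →* AC carrier
  counit : (ACcounit carrier).comp str = MonoidHom.id carrier
  coassoc : (ACmap str).comp str = (ACcomul carrier).comp str

attribute [instance] ACCoalgebra.grp

/-- An `AC`-cohomomorphism between `AC`-coalgebras: a group homomorphism
compatible with the coalgebra structure maps. -/
@[ext]
structure ACCoalgHom (X Y : ACCoalgebra) where
  hom : X.carrier →* Y.carrier
  cohom : Y.str.comp hom = (ACmap hom).comp X.str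

instance : Category ACCoalgebra where
  Hom := ACCoalgHom
  id X := ⟨MonoidHom.id _, by rw [MonoidHom.comp_id, ACmap_id, MonoidHom.id_comp]⟩
  comp f g := ⟨g.hom.comp f.hom, by
    rw [← MonoidHom.comp_assoc, g.cohom, MonoidHom.comp_assoc, f.cohom,
      ← MonoidHom.comp_assoc, ← ACmap_comp]⟩
  id_comp f := by apply ACCoalgHom.ext; exact MonoidHom.comp_id f.hom
  comp_id f := by apply ACCoalgHom.ext; exact MonoidHom.id_comp f.hom
  assoc f g h := by apply ACCoalgHom.ext; rfl

/-- The right-angled Artin group functor `A : Gph ⥤ Grp_{AC}`, sending a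
graph to its raag equipped with the canonical `AC`-coalgebra structure and a
graph homomorphism `φ` to the `AC`-cohomomorphism `Aφ`. -/
def raagCoalgFunctor : Gph ⥤ ACCoalgebra where
  obj Γ :=
    { carrier := Raag Γ
      str := raagCoalgStr Γ
      counit := Raag.hom_ext fun v => by simp
      coassoc := Raag.hom_ext fun v => by simp }
  map φ := ⟨φ.map, Raag.hom_ext fun v => by simp⟩
  map_id Γ := by apply ACCoalgHom.ext; exact Raag.hom_ext fun v => by simp [GphHom.id]; rfl
  map_comp φ ψ := by
    apply ACCoalgHom.ext
    exact Raag.hom_ext fun v => by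
      show (GphHom.comp ψ φ).map (Raag.of v) = (ψ.map.comp φ.map) (Raag.of v)
      simp [GphHom.comp]

/-!
A raag `A Γ` carries the coalgebra structure `v ↦ [v]`. Call `g` a vertex of a coalgebra `(G, 𝔤)`
if `𝔤 g = [g]`, and let `proj_S` be the endomorphism of a raag killing the generators outside `S`.
Applying `AC ε ∘ proj_{range 𝔤}` to both sides of the coassociativity law `AC 𝔤 ∘ 𝔤 = δ ∘ 𝔤` gives
`𝔤 = proj_{vertices} ∘ 𝔤`, so `𝔤` takes values in the subgroup generated by the `[h]` with `h` a
vertex. Hence `s ↦ s` and `retract ∘ 𝔤` are inverse isomorphisms between `G` and the raag of the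
commutation graph on the vertices of `G`. In a raag the vertices are exactly the generators, so a
cohomomorphism of raags maps generators to generators; as generators commute only along edges, it
is induced by a graph homomorphism.
-/

namespace Gph

abbrev induce (Γ : Gph) (S : Set Γ.V) : Gph where
  V := S
  rel v w := Γ.rel v w
  refl v := Γ.refl v
  symm := Γ.symm

def inclusion (Γ : Gph) (S : Set Γ.V) : GphHom (Γ.induce S) Γ :=
  ⟨Subtype.val, id⟩

end Gph

namespace Raag

variable {Γ : Gph}

noncomputable def toAbelianization (Γ : Gph) : Raag Γ →* Multiplicative (Γ.V →₀ ℤ) :=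
  lift (fun v => .ofAdd (Finsupp.single v 1)) fun _ => Commute.all _ _

theorem toAbelianization_of (v : Γ.V) :
    toAbelianization Γ (of v) = .ofAdd (Finsupp.single v 1) :=
  lift_of _ (fun _ => Commute.all _ _) v

theorem of_injective : Function.Injective (of : Γ.V → Raag Γ) := fun v w h =>
  Finsupp.single_left_injective one_ne_zero <| Multiplicative.ofAdd.injective <| by
    simpa only [toAbelianization_of] using congrArg (toAbelianization Γ) h

theorem of_ne_one (v : Γ.V) : (of v : Raag Γ) ≠ 1 := fun h =>
  one_ne_zero <| Finsupp.single_eq_zero.1 <| by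
    simpa only [toAbelianization_of, map_one, ofAdd_eq_one] using congrArg (toAbelianization Γ) h

/-- The generators of two unrelated vertices `a ≠ b` are sent to the non-commuting transpositions
`(0 1)` and `(1 2)` of `Fin 3`, all other generators to `1`. -/
theorem rel_of_commute {a b : Γ.V} (h : Commute (of a : Raag Γ) (of b)) : Γ.rel a b := by
  have hswap : (Equiv.swap 0 1 * Equiv.swap 1 2 : Equiv.Perm (Fin 3)) ≠
      Equiv.swap 1 2 * Equiv.swap 0 1 := by decide
  classical
  by_contra hab
  have hne : a ≠ b := fun e => hab (e ▸ Γ.refl a)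
  let f : Γ.V → Equiv.Perm (Fin 3) := fun v =>
    if v = a then Equiv.swap 0 1 else if v = b then Equiv.swap 1 2 else 1
  have hf : ∀ {v w}, Γ.rel v w → Commute (f v) (f w) := by
    intro v w hvw
    simp only [f]
    split_ifs <;> subst_vars <;> first
      | exact Commute.refl _ | exact Commute.one_left _ | exact Commute.one_right _
      | exact absurd hvw hab | exact absurd (Γ.symm hvw) hab
  have hfab := h.map (lift f hf)
  simp only [lift_of, f, if_pos, if_neg hne.symm] at hfab
  exact hswap hfab.eq

open Classical in
theorem retract_commute (S : Set Γ.V) {v w : Γ.V} (hvw : Γ.rel v w) :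
    Commute (if hv : v ∈ S then of (Γ := Γ.induce S) ⟨v, hv⟩ else 1)
      (if hw : w ∈ S then of (Γ := Γ.induce S) ⟨w, hw⟩ else 1) := by
  split_ifs
  · exact commute_of (Γ := Γ.induce S) hvw
  all_goals simp

open Classical in
noncomputable def retract (S : Set Γ.V) : Raag Γ →* Raag (Γ.induce S) :=
  lift (fun v => if hv : v ∈ S then of (Γ := Γ.induce S) ⟨v, hv⟩ else 1) (retract_commute S)

theorem retract_of_mem {S : Set Γ.V} {v : Γ.V} (hv : v ∈ S) :
    retract S (of v) = of (Γ := Γ.induce S) ⟨v, hv⟩ := by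
  simp [retract, hv]

theorem retract_of_not_mem {S : Set Γ.V} {v : Γ.V} (hv : v ∉ S) : retract S (of v) = 1 := by
  simp [retract, hv]

noncomputable def proj (S : Set Γ.V) : Raag Γ →* Raag Γ :=
  (Γ.inclusion S).map.comp (retract S)

@[simp]
theorem proj_of_mem {S : Set Γ.V} {v : Γ.V} (hv : v ∈ S) : proj S (of v) = of v := by
  simp [proj, retract_of_mem hv, Gph.inclusion]

@[simp]
theorem proj_of_not_mem {S : Set Γ.V} {v : Γ.V} (hv : v ∉ S) : proj S (of v) = 1 := by
  simp [proj, retract_of_not_mem hv]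

theorem proj_range_comp_raagCoalgStr :
    (proj (Set.range (of : Γ.V → Raag Γ))).comp (raagCoalgStr Γ) = raagCoalgStr Γ :=
  hom_ext fun v => by simp

theorem mem_range_of_of_raagCoalgStr_eq {g : Raag Γ} (h : raagCoalgStr Γ g = of g) :
    g ∈ Set.range (of : Γ.V → Raag Γ) := by
  by_contra hg
  apply of_ne_one (Γ := commGraph (Raag Γ)) g
  calc (of g : AC (Raag Γ)) = proj _ (raagCoalgStr Γ g) := by
        rw [← MonoidHom.comp_apply, proj_range_comp_raagCoalgStr, h]
    _ = 1 := by rw [h, proj_of_not_mem hg]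

end Raag

theorem Raag.proj_range_comp_ACmap {G H : Type} [Group G] [Group H] (f : G →* H) :
    (Raag.proj (Set.range f)).comp (ACmap f) = ACmap f :=
  Raag.hom_ext fun g => by simp

theorem GphHom.map_injective {Γ Δ : Gph} : Function.Injective (GphHom.map : GphHom Γ Δ → _) :=
  fun φ ψ h => GphHom.ext <| funext fun v => Raag.of_injective <| by
    simpa using DFunLike.congr_fun h (Raag.of v)

theorem GphHom.exists_map_eq {Γ Δ : Gph} (u : Raag Γ →* Raag Δ)
    (hu : (raagCoalgStr Δ).comp u = (ACmap u).comp (raagCoalgStr Γ)) :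
    ∃ φ : GphHom Γ Δ, φ.map = u := by
  have hgen (v : Γ.V) : u (Raag.of v) ∈ Set.range (Raag.of : Δ.V → Raag Δ) :=
    Raag.mem_range_of_of_raagCoalgStr_eq <| by simpa using DFunLike.congr_fun hu (Raag.of v)
  choose φ hφ using hgen
  refine ⟨⟨φ, fun hvw => Raag.rel_of_commute ?_⟩, Raag.hom_ext fun v => by simp [hφ]⟩
  rw [hφ, hφ]
  exact (Raag.commute_of hvw).map u

noncomputable def ACCoalgHom.isoOfInverse {X Y : ACCoalgebra} (f : X ⟶ Y)
    (g : Y.carrier →* X.carrier) (hgf : g.comp f.hom = .id _) (hfg : f.hom.comp g = .id _) :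
    X ≅ Y where
  hom := f
  inv := ⟨g, MonoidHom.ext fun y => calc
      X.str (g y) = ACmap g (ACmap f.hom (X.str (g y))) := by
        rw [← MonoidHom.comp_apply (ACmap g), ← ACmap_comp, hgf, ACmap_id]; rfl
      _ = ACmap g (Y.str (f.hom (g y))) := by rw [← MonoidHom.comp_apply Y.str, f.cohom]; rfl
      _ = ACmap g (Y.str y) := by rw [← MonoidHom.comp_apply f.hom, hfg]; rfl⟩
  hom_inv_id := ACCoalgHom.ext hgf
  inv_hom_id := ACCoalgHom.ext hfg

namespace ACCoalgebra

variable (X : ACCoalgebra)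

def vertices : Set X.carrier :=
  {g | X.str g = Raag.of g}

theorem of_mem_range_str_iff {g : X.carrier} :
    (Raag.of g : AC X.carrier) ∈ Set.range X.str ↔ g ∈ X.vertices := by
  refine ⟨fun ⟨h, hg⟩ => ?_, fun hg => ⟨g, hg⟩⟩
  have : h = g := by simpa [hg] using (DFunLike.congr_fun X.counit h).symm
  exact this ▸ hg

theorem map_counit_comp_proj_range_comp_comul :
    ((ACmap (ACcounit X.carrier)).comp (Raag.proj (Set.range X.str))).comp (ACcomul X.carrier) =
      Raag.proj X.vertices :=
  Raag.hom_ext fun g => by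
    by_cases hg : g ∈ X.vertices
    · simp [hg, X.of_mem_range_str_iff.2 hg]
    · simp [hg, mt X.of_mem_range_str_iff.1 hg]

theorem proj_vertices_comp_str : (Raag.proj X.vertices).comp X.str = X.str := by
  set Φ := (ACmap (ACcounit X.carrier)).comp (Raag.proj (Set.range X.str))
  calc (Raag.proj X.vertices).comp X.str = (Φ.comp (ACcomul X.carrier)).comp X.str := by
        rw [map_counit_comp_proj_range_comp_comul]
    _ = Φ.comp ((ACmap X.str).comp X.str) := by rw [MonoidHom.comp_assoc, X.coassoc]
    _ = (ACmap (ACcounit X.carrier)).comp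
          (((Raag.proj (Set.range X.str)).comp (ACmap X.str)).comp X.str) := by
        simp only [Φ, MonoidHom.comp_assoc]
    _ = (ACmap ((ACcounit X.carrier).comp X.str)).comp X.str := by
        rw [Raag.proj_range_comp_ACmap, ACmap_comp, MonoidHom.comp_assoc]
    _ = X.str := by rw [X.counit, ACmap_id, MonoidHom.id_comp]

abbrev vertexGraph : Gph :=
  (commGraph X.carrier).induce X.vertices

noncomputable def fromRaag : Raag X.vertexGraph →* X.carrier :=
  (ACcounit X.carrier).comp ((commGraph X.carrier).inclusion X.vertices).map

@[simp]
theorem fromRaag_of (s : X.vertices) : X.fromRaag (Raag.of s) = s := by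
  simp [fromRaag, Gph.inclusion]

noncomputable def toRaag : X.carrier →* Raag X.vertexGraph :=
  (Raag.retract X.vertices).comp X.str

theorem fromRaag_comp_toRaag : X.fromRaag.comp X.toRaag = .id _ := by
  change (ACcounit X.carrier).comp ((Raag.proj X.vertices).comp X.str) = _
  rw [proj_vertices_comp_str, X.counit]

theorem toRaag_comp_fromRaag : X.toRaag.comp X.fromRaag = .id _ :=
  Raag.hom_ext fun s => by
    simp [toRaag, show X.str s = Raag.of (s : X.carrier) from s.2, Raag.retract_of_mem s.2]

noncomputable def raagIso : raagCoalgFunctor.obj X.vertexGraph ≅ X :=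
  ACCoalgHom.isoOfInverse
    ⟨X.fromRaag, Raag.hom_ext fun s => by
      change X.str (X.fromRaag (Raag.of s)) = ACmap X.fromRaag (raagCoalgStr _ (Raag.of s))
      rw [fromRaag_of, raagCoalgStr_of, ACmap_of, fromRaag_of]
      exact s.2⟩
    X.toRaag X.toRaag_comp_fromRaag X.fromRaag_comp_toRaag

end ACCoalgebra

instance : raagCoalgFunctor.Faithful :=
  ⟨fun h => GphHom.map_injective (congrArg ACCoalgHom.hom h)⟩

instance : raagCoalgFunctor.Full :=
  ⟨fun u => (GphHom.exists_map_eq u.hom u.cohom).imp fun _ h => ACCoalgHom.ext h⟩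

instance : raagCoalgFunctor.EssSurj :=
  ⟨fun X => ⟨_, ⟨X.raagIso⟩⟩⟩

/-- **Main Theorem.** The right-angled Artin group functor `A : Gph → Grp` is
comonadic: it is an equivalence of categories between the category of graphs
and the category of groups equipped with an `AC`-coalgebra structure, with
`AC`-cohomomorphisms between them. -/
theorem raag_comonadic : raagCoalgFunctor.IsEquivalence := {}
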